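/- arXiv:2310.02541 — 2 statements merged into one kernel-verified Lean document; each statement's English description precedes it below -/
import Mathlib

section
/- Define the one-step 'unhinged' iterate w_{j,T}^{(1)} = w_j^{(0)} + (α a_j/(2n)) Σ_{i=1}^n φ'(⟨w_j^{(0)}, x_i⟩) y_i x_i for j ∈ [m], W_T^{(1)} = [w_{1,T}^{(1)}, …, w_{m,T}^{(1)}], and h_i^{(0)} = g_i^{(0)} − 1/2. Suppose Assumptions (A1) and (A2) hold, the training data satisfy (B1)–(B4), and W^{(0)} satisfies (C1). Then |h_i^{(0)}| ≤ p ω_init √(3m)/2 for every i ∈ [n], and ‖W_T^{(1)} − W^{(1)}‖_F ≤ α ω_init p^{3/2} √(3m) / √n. -/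
open MeasureTheory ProbabilityTheory BigOperators Filter
open scoped ENNReal NNReal

noncomputable section

namespace XOR

attribute [local instance] Classical.propDecidable

/-! ### Vectors, the network, and gradient descent -/

/-- Euclidean dot product on `Fin p → ℝ`. -/
def dot {p : ℕ} (x y : Fin p → ℝ) : ℝ := ∑ k, x k * y k

/-- Euclidean norm. -/
def nrm {p : ℕ} (x : Fin p → ℝ) : ℝ := Real.sqrt (dot x x)

/-- The ReLU activation. -/
def relu (z : ℝ) : ℝ := max z 0

/-- (A choice of) the derivative of the ReLU. -/
def reluD (z : ℝ) : ℝ := if 0 < z then 1 else 0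

/-- The two-layer ReLU network `f(x; W) = ∑ j, a j * φ(⟨w_j, x⟩)`. -/
def nnet {p m : ℕ} (a : Fin m → ℝ) (W : Fin m → Fin p → ℝ) (x : Fin p → ℝ) : ℝ :=
  ∑ j, a j * relu (dot (W j) x)

/-- `g(z) = -ℓ'(z) = 1/(1+e^z)` for the logistic loss `ℓ(z) = log(1+e^{-z})`. -/
def lossG (z : ℝ) : ℝ := 1 / (1 + Real.exp z)

/-- One step of gradient descent on the first-layer weights:
`w_j^{(t+1)} = w_j^{(t)} + (α a_j / n) ∑ i g_i^{(t)} φ'(⟨w_j^{(t)}, x_i⟩) y_i x_i`. -/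
def gdStep {n p m : ℕ} (α : ℝ) (X : Fin n → Fin p → ℝ) (Y : Fin n → ℝ)
    (a : Fin m → ℝ) (W : Fin m → Fin p → ℝ) : Fin m → Fin p → ℝ :=
  fun j k => W j k + (α * a j / n) *
    ∑ i, lossG (Y i * nnet a W (X i)) * reluD (dot (W j) (X i)) * (Y i * X i k)

/-- The gradient descent iterates `W^{(t)}`. -/
def gdIter {n p m : ℕ} (α : ℝ) (X : Fin n → Fin p → ℝ) (Y : Fin n → ℝ)
    (a : Fin m → ℝ) (W0 : Fin m → Fin p → ℝ) : ℕ → Fin m → Fin p → ℝ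
  | 0 => W0
  | t + 1 => gdStep α X Y a (gdIter α X Y a W0 t)

/-- Frobenius norm of the first-layer weight matrix. -/
def frob {p m : ℕ} (W : Fin m → Fin p → ℝ) : ℝ :=
  Real.sqrt (∑ j, ∑ k, (W j k) ^ 2)

/-! ### The XOR cluster structure -/

/-- The four cluster centers `+μ₁, -μ₁, +μ₂, -μ₂`, indexed by `Fin 4`. -/
def ctr {p : ℕ} (μ1 μ2 : Fin p → ℝ) : Fin 4 → Fin p → ℝ := ![μ1, -μ1, μ2, -μ2]

/-- The clean label of each cluster. -/
def cl : Fin 4 → ℝ := ![1, 1, -1, -1]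

/-- The index of the opposite center: `ν ↦ -ν`. -/
def negIdx : Fin 4 → Fin 4 := ![1, 0, 3, 2]

/-- The set of the four cluster centers. -/
def centers {p : ℕ} (μ1 μ2 : Fin p → ℝ) : Set (Fin p → ℝ) := {μ1, -μ1, μ2, -μ2}

/-- Structural hypotheses on the means: orthogonality and equal norms. -/
def MeanHyp {p : ℕ} (μ1 μ2 : Fin p → ℝ) : Prop :=
  dot μ1 μ2 = 0 ∧ nrm μ1 = nrm μ2

/-- Basic constraints on the parameters: `η ∈ [0, 1/2)`, `α > 0`, `ω_init ≥ 0`. -/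
def ParamHyp (η α winit : ℝ) : Prop :=
  0 ≤ η ∧ η < 1 / 2 ∧ 0 < α ∧ 0 ≤ winit

/-- Assumptions (A1)–(A6), where `μn = ‖μ‖`:
(A1) `‖μ‖² ≥ C n^{0.51} √p`, (A2) `p ≥ C n² ‖μ‖²`, (A3) `η ≤ 1/C`,
(A4) `α ≤ 1/(C n p)`, (A5) `ω_init n m^{3/2} p ≤ α ‖μ‖²`, (A6) `m ≥ C n^{0.02}`. -/
def Assum (C : ℝ) (n p m : ℕ) (μn η α winit : ℝ) : Prop :=
  C * (n : ℝ) ^ (0.51 : ℝ) * Real.sqrt p ≤ μn ^ 2 ∧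
  C * (n : ℝ) ^ 2 * μn ^ 2 ≤ (p : ℝ) ∧
  η ≤ 1 / C ∧
  α ≤ 1 / (C * n * p) ∧
  winit * n * (m : ℝ) ^ ((3 : ℝ) / 2) * (p : ℝ) ≤ α * μn ^ 2 ∧
  C * (n : ℝ) ^ (0.02 : ℝ) ≤ (m : ℝ)

/-! ### The probability model

The randomness is generated from canonical sources: for each training sample a
uniform cluster index in `Fin 4`, standard Gaussian noise in `ℝ^p`, and a standard
Gaussian variable whose CDF-value is used as the (uniform) label-flip coin; for
the network, uniform signs in `Bool` for the second layer, and standard Gaussian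
first-layer noise which is scaled by `ω_init`. -/

abbrev Vec (p : ℕ) := Fin p → ℝ

/-- Sample space: cluster indices, data noise, flip coins, second-layer signs,
and unscaled first-layer initialization. -/
abbrev Sample (n p m : ℕ) :=
  (Fin n → Fin 4) × (Fin n → Vec p) × (Fin n → ℝ) × (Fin m → Bool) × (Fin m → Vec p)

/-- The standard Gaussian measure on `ℝ^p`. -/
def stdG (p : ℕ) : Measure (Vec p) := Measure.pi fun _ => gaussianReal 0 1

/-- The joint law of all randomness. -/
def sampleMeasure (n p m : ℕ) : Measure (Sample n p m) :=
  ((PMF.uniformOfFintype (Fin n → Fin 4)).toMeasure).prod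
    ((Measure.pi fun _ : Fin n => stdG p).prod
      ((Measure.pi fun _ : Fin n => gaussianReal 0 1).prod
        (((PMF.uniformOfFintype (Fin m → Bool)).toMeasure).prod
          (Measure.pi fun _ : Fin m => stdG p))))

/-- The training inputs `x_i = x̄_i + ξ_i`. -/
def trainX {n p m : ℕ} (μ1 μ2 : Vec p) (ω : Sample n p m) : Fin n → Vec p :=
  fun i => ctr μ1 μ2 (ω.1 i) + ω.2.1 i

/-- The (possibly flipped) training labels: the label is flipped iff the uniform
variable `Φ(g_i)` is `< η`, which happens with probability `η`. -/
def trainY {n p m : ℕ} (η : ℝ) (ω : Sample n p m) : Fin n → ℝ :=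
  fun i => (if cdf (gaussianReal 0 1) (ω.2.2.1 i) < η then -1 else 1) * cl (ω.1 i)

/-- The second-layer weights `a_j ∈ {± 1/√m}`. -/
def secondLayer {n p m : ℕ} (ω : Sample n p m) : Fin m → ℝ :=
  fun j => if ω.2.2.2.1 j then 1 / Real.sqrt m else -(1 / Real.sqrt m)

/-- The initialization `w_j^{(0)} ∼ N(0, ω_init² I_p)`. -/
def initW {n p m : ℕ} (winit : ℝ) (ω : Sample n p m) : Fin m → Vec p :=
  fun j k => winit * ω.2.2.2.2 j k

/-- The trained first-layer weights `W^{(t)}`. -/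
def netW {n p m : ℕ} (μ1 μ2 : Vec p) (η α winit : ℝ) (ω : Sample n p m) (t : ℕ) :
    Fin m → Vec p :=
  gdIter α (trainX μ1 μ2 ω) (trainY η ω) (secondLayer ω) (initW winit ω) t

/-- The clean test distribution `P_clean` on `ℝ^p × ℝ`. -/
def Pclean (p : ℕ) (μ1 μ2 : Vec p) : Measure (Vec p × ℝ) :=
  Measure.map (fun w : Fin 4 × Vec p => (ctr μ1 μ2 w.1 + w.2, cl w.1))
    (((PMF.uniformOfFintype (Fin 4)).toMeasure).prod (stdG p))

/-- The Gaussian measure `N(ν, I_p)` at center index `q`. -/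
def gaussAt {p : ℕ} (μ1 μ2 : Vec p) (q : Fin 4) : Measure (Vec p) :=
  Measure.map (fun z => ctr μ1 μ2 q + z) (stdG p)

/-- The clean test error of the classifier `sgn ∘ f(·; a, W)`. -/
def testErr {p m : ℕ} (μ1 μ2 : Vec p) (a : Fin m → ℝ) (W : Fin m → Vec p) : ℝ :=
  ((Pclean p μ1 μ2) {xy : Vec p × ℝ | xy.2 ≠ Real.sign (nnet a W xy.1)}).toReal

/-! ### Counts, alignment, and the "good run" conditions -/

/-- `c_ν`: number of clean samples in the cluster with center index `q`. -/
def cntC {n : ℕ} (u : Fin n → Fin 4) (Y : Fin n → ℝ) (q : Fin 4) : ℕ :=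
  (Finset.univ.filter fun i => u i = q ∧ Y i = cl q).card

/-- `n_ν`: number of noisy samples in the cluster with center index `q`. -/
def cntN {n : ℕ} (u : Fin n → Fin 4) (Y : Fin n → ℝ) (q : Fin 4) : ℕ :=
  (Finset.univ.filter fun i => u i = q ∧ Y i ≠ cl q).card

/-- The clean samples of cluster `q` activating neuron `j` for weights `W`. -/
def actC {n p m : ℕ} (u : Fin n → Fin 4) (X : Fin n → Vec p) (Y : Fin n → ℝ)
    (W : Fin m → Vec p) (q : Fin 4) (j : Fin m) : Finset (Fin n) :=
  Finset.univ.filter fun i => u i = q ∧ Y i = cl q ∧ 0 < dot (W j) (X i)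

/-- The noisy samples of cluster `q` activating neuron `j` for weights `W`. -/
def actN {n p m : ℕ} (u : Fin n → Fin 4) (X : Fin n → Vec p) (Y : Fin n → ℝ)
    (W : Fin m → Vec p) (q : Fin 4) (j : Fin m) : Finset (Fin n) :=
  Finset.univ.filter fun i => u i = q ∧ Y i ≠ cl q ∧ 0 < dot (W j) (X i)

/-- `d_{ν,j} = |C_{ν,j}| - |N_{ν,j}|`. -/
def dval {n p m : ℕ} (u : Fin n → Fin 4) (X : Fin n → Vec p) (Y : Fin n → ℝ)
    (W : Fin m → Vec p) (q : Fin 4) (j : Fin m) : ℤ :=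
  ((actC u X Y W q j).card : ℤ) - ((actN u X Y W q j).card : ℤ)

/-- `D_{ν,j} = d_{ν,j} - d_{-ν,j}`. -/
def Dval {n p m : ℕ} (u : Fin n → Fin 4) (X : Fin n → Vec p) (Y : Fin n → ℝ)
    (W : Fin m → Vec p) (q : Fin 4) (j : Fin m) : ℤ :=
  dval u X Y W q j - dval u X Y W (negIdx q) j

/-- Neuron `j` is `(ν, κ)`-aligned (w.r.t. the initialization `W0`). -/
def Aligned {n p m : ℕ} (u : Fin n → Fin 4) (X : Fin n → Vec p) (Y : Fin n → ℝ)
    (W0 : Fin m → Vec p) (κ : ℝ) (q : Fin 4) (j : Fin m) : Prop :=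
  (n : ℝ) ^ ((1 : ℝ) / 2 - κ) < (Dval u X Y W0 q j : ℝ) ∧
  max ((dval u X Y W0 (negIdx q) j : ℝ)) ((dval u X Y W0 q j : ℝ)) <
    min (cntC u Y q : ℝ) (cntC u Y (negIdx q) : ℝ) -
      2 * ((cntN u Y q : ℝ) + (cntN u Y (negIdx q) : ℝ)) - Real.sqrt n

/-- Condition (B1). -/
def CondB1 {n p : ℕ} (μ1 μ2 : Vec p) (u : Fin n → Fin 4) (X : Fin n → Vec p) : Prop :=
  ∀ k : Fin n,
    (∀ ν ∈ centers μ1 μ2, dot (X k - ctr μ1 μ2 (u k)) ν ≤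
        10 * Real.sqrt (Real.log n) * nrm μ1) ∧
    |nrm (X k) ^ 2 - p - nrm μ1 ^ 2| ≤ 10 * Real.sqrt (p * Real.log n)

/-- Condition (B2). -/
def CondB2 {n p : ℕ} (μ1 μ2 : Vec p) (u : Fin n → Fin 4) (X : Fin n → Vec p) : Prop :=
  ∀ i k : Fin n, i ≠ k →
    |dot (X i) (X k) - dot (ctr μ1 μ2 (u i)) (ctr μ1 μ2 (u k))| ≤
      10 * Real.sqrt (p * Real.log n)

/-- Condition (B3). -/
def CondB3 {n : ℕ} (ε η : ℝ) (u : Fin n → Fin 4) (Y : Fin n → ℝ) : Prop :=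
  ∀ q : Fin 4,
    |(cntC u Y q : ℝ) + (cntN u Y q : ℝ) - n / 4| ≤ Real.sqrt (ε * n * Real.log n) ∧
    |(cntN u Y q : ℝ) - η * ((cntC u Y q : ℝ) + (cntN u Y q : ℝ))| ≤
      Real.sqrt (ε * η * n * Real.log n)

/-- Condition (B4). -/
def CondB4 {n : ℕ} (ε η : ℝ) (u : Fin n → Fin 4) (Y : Fin n → ℝ) : Prop :=
  ∀ q : Fin 4,
    (n : ℝ) ^ ((1 : ℝ) / 2 - ε) ≤
      |(cntC u Y q : ℝ) + (cntN u Y q : ℝ) -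
        (cntC u Y (negIdx q) : ℝ) - (cntN u Y (negIdx q) : ℝ)| ∧
    η * (n : ℝ) ^ ((1 : ℝ) / 2 - ε) ≤ |(cntN u Y q : ℝ) - (cntN u Y (negIdx q) : ℝ)|

/-- Conditions (B1)–(B4) together. -/
def CondB {n p : ℕ} (ε : ℝ) (μ1 μ2 : Vec p) (η : ℝ) (u : Fin n → Fin 4)
    (X : Fin n → Vec p) (Y : Fin n → ℝ) : Prop :=
  CondB1 μ1 μ2 u X ∧ CondB2 μ1 μ2 u X ∧ CondB3 ε η u Y ∧ CondB4 ε η u Y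

/-- Condition (C1): `‖W^{(0)}‖_F² ≤ (3/2) ω_init² m p`. -/
def CondC1 {p m : ℕ} (winit : ℝ) (W0 : Fin m → Vec p) : Prop :=
  ∑ j, ∑ k, (W0 j k) ^ 2 ≤ 3 / 2 * winit ^ 2 * m * p

/-- The positive neurons `J_Pos`. -/
def posNeurons {m : ℕ} (a : Fin m → ℝ) : Finset (Fin m) :=
  Finset.univ.filter fun j => 0 < a j

/-- The negative neurons `J_Neg`. -/
def negNeurons {m : ℕ} (a : Fin m → ℝ) : Finset (Fin m) :=
  Finset.univ.filter fun j => a j < 0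

/-- Condition (C2): `|J_Pos| ≥ m/3` and `|J_Neg| ≥ m/3`. -/
def CondC2 {m : ℕ} (a : Fin m → ℝ) : Prop :=
  (m : ℝ) / 3 ≤ (posNeurons a).card ∧ (m : ℝ) / 3 ≤ (negNeurons a).card

/-- Condition (D1). -/
def CondD1 {n p m : ℕ} (u : Fin n → Fin 4) (X : Fin n → Vec p)
    (a : Fin m → ℝ) (W0 : Fin m → Vec p) : Prop :=
  ∀ i : Fin n,
    (m : ℝ) / 7 ≤ ((posNeurons a).filter fun j => 0 < dot (W0 j) (X i)).card ∧
    (m : ℝ) / 7 ≤ ((negNeurons a).filter fun j => 0 < dot (W0 j) (X i)).card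

/-- Condition (D2). -/
def CondD2 {n p m : ℕ} (ε : ℝ) (u : Fin n → Fin 4) (X : Fin n → Vec p) (Y : Fin n → ℝ)
    (a : Fin m → ℝ) (W0 : Fin m → Vec p) : Prop :=
  ∀ q : Fin 4, ∀ κ : ℝ, 0 ≤ κ → κ < 1 / 2 →
    (m : ℝ) * (n : ℝ) ^ (-(10 * ε)) ≤
      ((posNeurons a).filter fun j => Aligned u X Y W0 κ q j).card ∧
    (m : ℝ) * (n : ℝ) ^ (-(10 * ε)) ≤
      ((negNeurons a).filter fun j => Aligned u X Y W0 κ q j).card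

/-- Condition (D3). -/
def CondD3 {n p m : ℕ} (ε : ℝ) (u : Fin n → Fin 4) (X : Fin n → Vec p) (Y : Fin n → ℝ)
    (a : Fin m → ℝ) (W0 : Fin m → Vec p) : Prop :=
  ∀ q : Fin 4,
    (1 - 10 * (n : ℝ) ^ (-(20 * ε))) * (posNeurons a).card ≤
      ((posNeurons a).filter fun j =>
        Aligned u X Y W0 (20 * ε) q j ∨ Aligned u X Y W0 (20 * ε) (negIdx q) j).card ∧
    (1 - 10 * (n : ℝ) ^ (-(20 * ε))) * (negNeurons a).card ≤
      ((negNeurons a).filter fun j =>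
        Aligned u X Y W0 (20 * ε) q j ∨ Aligned u X Y W0 (20 * ε) (negIdx q) j).card

/-- Condition (D4). -/
def CondD4 {n p m : ℕ} (u : Fin n → Fin 4) (X : Fin n → Vec p) (Y : Fin n → ℝ)
    (a : Fin m → ℝ) (W0 : Fin m → Vec p) : Prop :=
  ∀ q : Fin 4, ∀ κ : ℝ, 0 ≤ κ → κ < 1 / 2 →
    ((n : ℝ) / 10) * ((posNeurons a).filter fun j => Aligned u X Y W0 κ q j).card ≤
      (∑ j ∈ (posNeurons a).filter (fun j => Aligned u X Y W0 κ q j),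
        ((cntC u Y q : ℝ) - (cntN u Y q : ℝ) - (dval u X Y W0 (negIdx q) j : ℝ))) ∧
    ((n : ℝ) / 10) * ((negNeurons a).filter fun j => Aligned u X Y W0 κ q j).card ≤
      (∑ j ∈ (negNeurons a).filter (fun j => Aligned u X Y W0 κ q j),
        ((cntC u Y q : ℝ) - (cntN u Y q : ℝ) - (dval u X Y W0 (negIdx q) j : ℝ)))

/-- Conditions (D1)–(D4) together. -/
def CondD {n p m : ℕ} (ε : ℝ) (u : Fin n → Fin 4) (X : Fin n → Vec p) (Y : Fin n → ℝ)
    (a : Fin m → ℝ) (W0 : Fin m → Vec p) : Prop :=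
  CondD1 u X a W0 ∧ CondD2 ε u X Y a W0 ∧ CondD3 ε u X Y a W0 ∧ CondD4 u X Y a W0

/-- A "good run": conditions (B1)–(B4), (C1)–(C2) and (D1)–(D4) all hold. -/
def GoodRun {n p m : ℕ} (ε : ℝ) (μ1 μ2 : Vec p) (η winit : ℝ) (u : Fin n → Fin 4)
    (X : Fin n → Vec p) (Y : Fin n → ℝ) (a : Fin m → ℝ) (W0 : Fin m → Vec p) : Prop :=
  CondB ε μ1 μ2 η u X Y ∧ CondC1 winit W0 ∧ CondC2 a ∧ CondD ε u X Y a W0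

/-- Labels take values in `{±1}`. -/
def ModelData {n : ℕ} (Y : Fin n → ℝ) : Prop := ∀ i, Y i = 1 ∨ Y i = -1

/-- Second-layer weights take values in `{±1/√m}`. -/
def ModelLayer {m : ℕ} (a : Fin m → ℝ) : Prop :=
  ∀ j, a j = 1 / Real.sqrt m ∨ a j = -(1 / Real.sqrt m)

end XOR

namespace XOR

attribute [local instance] Classical.propDecidable

lemma dot_self_nonneg' {p : ℕ} (x : Vec p) : 0 ≤ dot x x :=
  Finset.sum_nonneg fun k _ => mul_self_nonneg _

lemma nrm_sq' {p : ℕ} (x : Vec p) : nrm x ^ 2 = dot x x :=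
  Real.sq_sqrt (dot_self_nonneg' x)

lemma dot_comm' {p : ℕ} (x y : Vec p) : dot x y = dot y x :=
  Finset.sum_congr rfl fun k _ => mul_comm _ _

lemma dot_neg_left' {p : ℕ} (x y : Vec p) : dot (-x) y = -dot x y := by
  simp [dot, neg_mul, Finset.sum_neg_distrib]

lemma dot_neg_right' {p : ℕ} (x y : Vec p) : dot x (-y) = -dot x y := by
  simp [dot, mul_neg, Finset.sum_neg_distrib]

lemma sum_sq_eq_dot {p : ℕ} (x : Vec p) : ∑ k, x k ^ 2 = dot x x :=
  Finset.sum_congr rfl fun k _ => pow_two _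

lemma abs_dot_le' {p : ℕ} (x y : Vec p) : |dot x y| ≤ nrm x * nrm y := by
  have h2 : (dot x y) ^ 2 ≤ (nrm x * nrm y) ^ 2 := by
    rw [mul_pow, nrm_sq', nrm_sq', ← sum_sq_eq_dot, ← sum_sq_eq_dot]
    exact Finset.sum_mul_sq_le_sq_mul_sq Finset.univ x y
  calc |dot x y| = Real.sqrt ((dot x y) ^ 2) := (Real.sqrt_sq_eq_abs _).symm
    _ ≤ Real.sqrt ((nrm x * nrm y) ^ 2) := Real.sqrt_le_sqrt h2
    _ = nrm x * nrm y := Real.sqrt_sq (mul_nonneg (Real.sqrt_nonneg _) (Real.sqrt_nonneg _))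

lemma sigmoid_half (z : ℝ) (hz : 0 ≤ z) : |1 / (1 + Real.exp z) - 1 / 2| ≤ |z| / 2 := by
  have hepos : (0 : ℝ) < Real.exp z := Real.exp_pos z
  have he1 : (1 : ℝ) ≤ Real.exp z := Real.one_le_exp hz
  have hpos : (0 : ℝ) < 1 + Real.exp z := by linarith
  have hkey : Real.exp z - 1 ≤ z * (1 + Real.exp z) := by
    have h1 : -z + 1 ≤ Real.exp (-z) := Real.add_one_le_exp (-z)
    rw [Real.exp_neg] at h1
    have h2 : (-z + 1) * Real.exp z ≤ (Real.exp z)⁻¹ * Real.exp z :=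
      mul_le_mul_of_nonneg_right h1 hepos.le
    rw [inv_mul_cancel₀ hepos.ne'] at h2
    nlinarith
  have hle : 1 / (1 + Real.exp z) ≤ 1 / 2 := by
    rw [div_le_div_iff₀ hpos two_pos]; linarith
  rw [abs_of_nonpos (by linarith), abs_of_nonneg hz]
  have h3 : 1 / 2 - 1 / (1 + Real.exp z) ≤ z / 2 := by
    rw [div_sub_div _ _ two_ne_zero hpos.ne', div_le_div_iff₀ (by positivity) two_pos]
    nlinarith
  linarith

lemma sigmoid_dev (z : ℝ) : |lossG z - 1 / 2| ≤ |z| / 2 := by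
  rcases le_total 0 z with hz | hz
  · exact sigmoid_half z hz
  · have h := sigmoid_half (-z) (neg_nonneg.2 hz)
    have hsym : lossG z - 1 / 2 = -(1 / (1 + Real.exp (-z)) - 1 / 2) := by
      unfold lossG
      have h1 : (0 : ℝ) < Real.exp z := Real.exp_pos z
      have h2 : (0 : ℝ) < Real.exp (-z) := Real.exp_pos (-z)
      rw [Real.exp_neg]
      field_simp
      ring
    rw [hsym, abs_neg]
    rwa [abs_neg] at h

set_option maxHeartbeats 1000000 in
/-- Lemma on the one-step "unhinged" iterate: under (A1)–(A2),
(B1)–(B4) and (C1), the initial sigmoid deviations satisfy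
`|h_i^{(0)}| ≤ p ω_init √(3m)/2` and the unhinged iterate `W_T^{(1)}` is close to
the true first iterate: `‖W_T^{(1)} − W^{(1)}‖_F ≤ α ω_init p^{3/2} √(3m)/√n`. -/
theorem unhinged_one_step :
    ∀ ε : ℝ, 0 < ε → ε < 1 / 4000 →
      ∃ (C₀ : ℝ) (N₀ : ℕ),
        ∀ C : ℝ, C₀ ≤ C →
        ∀ (n p m : ℕ) (μ1 μ2 : Vec p) (η α winit : ℝ)
          (u : Fin n → Fin 4) (X : Fin n → Vec p) (Y : Fin n → ℝ)
          (a : Fin m → ℝ) (W0 : Fin m → Vec p),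
          N₀ ≤ n →
          MeanHyp μ1 μ2 →
          ParamHyp η α winit →
          C * (n : ℝ) ^ (0.51 : ℝ) * Real.sqrt p ≤ nrm μ1 ^ 2 →
          C * (n : ℝ) ^ 2 * nrm μ1 ^ 2 ≤ (p : ℝ) →
          ModelData Y →
          ModelLayer a →
          CondB ε μ1 μ2 η u X Y →
          CondC1 winit W0 →
          (∀ i : Fin n,
            |lossG (Y i * nnet a W0 (X i)) - 1 / 2| ≤
              (p : ℝ) * winit * Real.sqrt (3 * m) / 2) ∧
          frob
            ((fun j k =>
                W0 j k + α * a j / (2 * n) *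
                  ∑ i, reluD (dot (W0 j) (X i)) * (Y i * X i k)) -
              gdIter α X Y a W0 1) ≤
            α * winit * (p : ℝ) ^ ((3 : ℝ) / 2) * Real.sqrt (3 * m) / Real.sqrt n := by
  intro ε hε hε2
  refine ⟨1, 10, ?_⟩
  intro C hC n p m μ1 μ2 η α winit u X Y a W0 hn hMean hPar hA1 hA2 hY ha hB hCc1
  obtain ⟨hB1, hB2, _hB3, _hB4⟩ := hB
  obtain ⟨hη0, hηh, hα, hw⟩ := hPar
  have hn10 : (10 : ℝ) ≤ (n : ℝ) := by exact_mod_cast hn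
  have hn0 : (0 : ℝ) < (n : ℝ) := by linarith
  have hp0 : (0 : ℝ) ≤ (p : ℝ) := Nat.cast_nonneg p
  have hμ0 : (0 : ℝ) ≤ nrm μ1 ^ 2 := sq_nonneg _
  -- (A2) with C ≥ 1
  have hA2' : (n : ℝ) ^ 2 * nrm μ1 ^ 2 ≤ (p : ℝ) := by nlinarith [sq_nonneg (n : ℝ)]
  -- log bounds
  have hlog0 : (0 : ℝ) ≤ Real.log n := Real.log_nonneg (by linarith)
  have hlogn : Real.log n ≤ (n : ℝ) := by
    have := Real.log_le_sub_one_of_pos hn0; linarith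
  -- the key square-root bound: √(p log n) ≤ p / (10 n)
  have hs : Real.sqrt ((p : ℝ) * Real.log n) ≤ (p : ℝ) / (10 * n) := by
    rcases Nat.eq_zero_or_pos p with hp | hp
    · subst hp; simp
    · have hp1 : (1 : ℝ) ≤ (p : ℝ) := by exact_mod_cast hp
      -- p ≥ n^5
      have hsp0 : (0 : ℝ) < Real.sqrt p := Real.sqrt_pos.2 (by linarith)
      have hsn : Real.sqrt (n : ℝ) ^ 2 = (n : ℝ) := Real.sq_sqrt hn0.le
      have hsp : Real.sqrt (p : ℝ) ^ 2 = (p : ℝ) := Real.sq_sqrt hp0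
      have hmu_lb : Real.sqrt n * Real.sqrt p ≤ nrm μ1 ^ 2 := by
        have e1 : (n : ℝ) ^ ((1 : ℝ) / 2) ≤ (n : ℝ) ^ (0.51 : ℝ) :=
          Real.rpow_le_rpow_of_exponent_le (by linarith) (by norm_num)
        have e2 : (n : ℝ) ^ ((1 : ℝ) / 2) = Real.sqrt n := (Real.sqrt_eq_rpow (n : ℝ)).symm
        have e3 : Real.sqrt n * Real.sqrt p ≤ C * (n : ℝ) ^ (0.51 : ℝ) * Real.sqrt p := by
          have : Real.sqrt n ≤ C * (n : ℝ) ^ (0.51 : ℝ) := by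
            calc Real.sqrt n = 1 * (n : ℝ) ^ ((1 : ℝ) / 2) := by rw [one_mul, e2]
              _ ≤ C * (n : ℝ) ^ (0.51 : ℝ) := by
                  apply mul_le_mul hC e1 (by positivity) (by linarith)
          exact mul_le_mul_of_nonneg_right this (Real.sqrt_nonneg _)
        linarith [hA1]
      have hchain : (n : ℝ) ^ 2 * (Real.sqrt n * Real.sqrt p) ≤ (p : ℝ) := by
        calc (n : ℝ) ^ 2 * (Real.sqrt n * Real.sqrt p) ≤ (n : ℝ) ^ 2 * nrm μ1 ^ 2 := by
              apply mul_le_mul_of_nonneg_left hmu_lb (by positivity)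
          _ ≤ (p : ℝ) := hA2'
      have hsqp_lb : (n : ℝ) ^ 2 * Real.sqrt n ≤ Real.sqrt p := by
        have := hchain
        rw [← hsp] at this
        have h2 : (n : ℝ) ^ 2 * Real.sqrt n * Real.sqrt p ≤ Real.sqrt p * Real.sqrt p := by
          nlinarith
        exact le_of_mul_le_mul_right h2 hsp0
      have hp5 : (n : ℝ) ^ 5 ≤ (p : ℝ) := by
        have h2 : ((n : ℝ) ^ 2 * Real.sqrt n) ^ 2 ≤ Real.sqrt p ^ 2 := by
          apply pow_le_pow_left₀ (by positivity) hsqp_lb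
        rw [hsp] at h2
        calc (n : ℝ) ^ 5 = ((n : ℝ) ^ 2) ^ 2 * (n : ℝ) := by ring
          _ = ((n : ℝ) ^ 2 * Real.sqrt n) ^ 2 := by rw [mul_pow, hsn]
          _ ≤ (p : ℝ) := h2
      -- 100 n² log n ≤ p
      have h100 : 100 * (n : ℝ) ^ 2 * Real.log n ≤ (p : ℝ) := by
        have : 100 * (n : ℝ) ^ 2 * Real.log n ≤ 100 * (n : ℝ) ^ 2 * (n : ℝ) :=
          mul_le_mul_of_nonneg_left hlogn (by positivity)
        have h5 : 100 * (n : ℝ) ^ 2 * (n : ℝ) ≤ (n : ℝ) ^ 5 := by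
          nlinarith [mul_le_mul_of_nonneg_right (show (100 : ℝ) ≤ (n : ℝ) ^ 2 by nlinarith)
            (show (0 : ℝ) ≤ (n : ℝ) ^ 3 by positivity)]
        linarith
      have harg : (p : ℝ) * Real.log n ≤ ((p : ℝ) / (10 * n)) ^ 2 := by
        rw [div_pow]
        rw [le_div_iff₀ (by positivity)]
        have := mul_le_mul_of_nonneg_left h100 hp0
        calc (p : ℝ) * Real.log n * (10 * n) ^ 2 = (p : ℝ) * (100 * (n : ℝ) ^ 2 * Real.log n) := by
              ring
          _ ≤ (p : ℝ) * (p : ℝ) := this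
          _ = (p : ℝ) ^ 2 := by ring
      calc Real.sqrt ((p : ℝ) * Real.log n) ≤ Real.sqrt (((p : ℝ) / (10 * n)) ^ 2) :=
            Real.sqrt_le_sqrt harg
        _ = (p : ℝ) / (10 * n) := Real.sqrt_sq (by positivity)
  -- consequences
  have hmu_half : nrm μ1 ^ 2 ≤ (p : ℝ) / 2 := by
    have h2 : (2 : ℝ) ≤ (n : ℝ) ^ 2 := by nlinarith
    nlinarith [mul_le_mul_of_nonneg_right h2 hμ0]
  have hsq_half : 10 * Real.sqrt ((p : ℝ) * Real.log n) ≤ (p : ℝ) / 2 := by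
    have : 10 * Real.sqrt ((p : ℝ) * Real.log n) ≤ 10 * ((p : ℝ) / (10 * n)) := by linarith
    have h2 : 10 * ((p : ℝ) / (10 * n)) = (p : ℝ) / n := by
      field_simp
    rw [h2] at this
    have h3 : (p : ℝ) / n ≤ (p : ℝ) / 2 :=
      div_le_div_of_nonneg_left hp0 two_pos (by linarith)
    linarith
  -- ‖x_i‖² ≤ 2p
  have hXnorm : ∀ k : Fin n, dot (X k) (X k) ≤ 2 * (p : ℝ) := by
    intro k
    have h1 := (hB1 k).2
    have h2 : nrm (X k) ^ 2 ≤ (p : ℝ) + nrm μ1 ^ 2 + 10 * Real.sqrt ((p : ℝ) * Real.log n) := by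
      have := abs_le.1 h1
      linarith [this.2]
    rw [nrm_sq'] at h2
    linarith
  -- |⟨x̄_i, x̄_k⟩| ≤ ‖μ‖²
  have hctr : ∀ q q' : Fin 4, |dot (ctr μ1 μ2 q) (ctr μ1 μ2 q')| ≤ nrm μ1 ^ 2 := by
    have h11 : dot μ1 μ1 = nrm μ1 ^ 2 := (nrm_sq' μ1).symm
    have h22 : dot μ2 μ2 = nrm μ1 ^ 2 := by rw [← nrm_sq', hMean.2]
    have h12 : dot μ1 μ2 = 0 := hMean.1
    have h21 : dot μ2 μ1 = 0 := by rw [dot_comm']; exact h12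
    intro q q'
    fin_cases q <;> fin_cases q' <;>
      simp [ctr, dot_neg_left', dot_neg_right', h11, h22, h12, h21,
        abs_of_nonneg hμ0, hμ0]
  -- off-diagonal bound
  have hoff : ∀ i k : Fin n, i ≠ k →
      |dot (X i) (X k)| ≤ nrm μ1 ^ 2 + 10 * Real.sqrt ((p : ℝ) * Real.log n) := by
    intro i k hik
    have h1 := hB2 i k hik
    have h2 := hctr (u i) (u k)
    calc |dot (X i) (X k)| =
        |(dot (X i) (X k) - dot (ctr μ1 μ2 (u i)) (ctr μ1 μ2 (u k))) +
          dot (ctr μ1 μ2 (u i)) (ctr μ1 μ2 (u k))| := by ring_nf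
      _ ≤ |dot (X i) (X k) - dot (ctr μ1 μ2 (u i)) (ctr μ1 μ2 (u k))| +
          |dot (ctr μ1 μ2 (u i)) (ctr μ1 μ2 (u k))| := abs_add_le _ _
      _ ≤ nrm μ1 ^ 2 + 10 * Real.sqrt ((p : ℝ) * Real.log n) := by linarith
  -- Cauchy–Schwarz for the sum of norms of rows of W0
  have hsumnrm : ∑ j, nrm (W0 j) ≤
      Real.sqrt m * Real.sqrt (∑ j, ∑ k, (W0 j k) ^ 2) := by
    have h := Finset.sum_mul_sq_le_sq_mul_sq Finset.univ (fun _ : Fin m => (1 : ℝ))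
      (fun j => nrm (W0 j))
    simp only [one_mul, one_pow] at h
    have h2 : (∑ j, nrm (W0 j)) ^ 2 ≤ (m : ℝ) * ∑ j, ∑ k, (W0 j k) ^ 2 := by
      have e : ∀ j : Fin m, nrm (W0 j) ^ 2 = ∑ k, (W0 j k) ^ 2 := fun j => by
        rw [nrm_sq', ← sum_sq_eq_dot]
      calc (∑ j, nrm (W0 j)) ^ 2 ≤ (∑ _j : Fin m, (1 : ℝ)) * ∑ j, nrm (W0 j) ^ 2 := h
        _ = (m : ℝ) * ∑ j, ∑ k, (W0 j k) ^ 2 := by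
            rw [Finset.sum_const, Finset.card_univ, Fintype.card_fin, nsmul_eq_mul, mul_one]
            rw [Finset.sum_congr rfl fun j _ => e j]
    calc ∑ j, nrm (W0 j) = Real.sqrt ((∑ j, nrm (W0 j)) ^ 2) :=
          (Real.sqrt_sq (Finset.sum_nonneg fun j _ => Real.sqrt_nonneg _)).symm
      _ ≤ Real.sqrt ((m : ℝ) * ∑ j, ∑ k, (W0 j k) ^ 2) := Real.sqrt_le_sqrt h2
      _ = Real.sqrt m * Real.sqrt (∑ j, ∑ k, (W0 j k) ^ 2) :=
          Real.sqrt_mul (Nat.cast_nonneg m) _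
  have hXle : ∀ i : Fin n, nrm (X i) ≤ Real.sqrt (2 * p) := by
    intro i
    rw [nrm]
    exact Real.sqrt_le_sqrt (hXnorm i)
  have haj : ∀ j, |a j| = 1 / Real.sqrt m := by
    intro j
    rcases ha j with h | h <;> rw [h]
    · exact abs_of_nonneg (by positivity)
    · rw [abs_neg]; exact abs_of_nonneg (by positivity)
  -- the network output at initialization is small
  have hnet : ∀ i : Fin n, |nnet a W0 (X i)| ≤ (p : ℝ) * winit * Real.sqrt (3 * m) := by
    intro i
    have hrelu_le : ∀ j : Fin m, relu (dot (W0 j) (X i)) ≤ nrm (W0 j) * Real.sqrt (2 * p) := by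
      intro j
      calc relu (dot (W0 j) (X i)) ≤ |dot (W0 j) (X i)| :=
            max_le (le_abs_self _) (abs_nonneg _)
        _ ≤ nrm (W0 j) * nrm (X i) := abs_dot_le' _ _
        _ ≤ nrm (W0 j) * Real.sqrt (2 * p) :=
            mul_le_mul_of_nonneg_left (hXle i) (Real.sqrt_nonneg _)
    have hrelu0 : ∀ j : Fin m, 0 ≤ relu (dot (W0 j) (X i)) := fun j => le_max_right _ _
    have step1 : |nnet a W0 (X i)| ≤
        ∑ j, (1 / Real.sqrt m) * (nrm (W0 j) * Real.sqrt (2 * p)) := by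
      calc |nnet a W0 (X i)| ≤ ∑ j, |a j * relu (dot (W0 j) (X i))| :=
            Finset.abs_sum_le_sum_abs _ _
        _ = ∑ j, (1 / Real.sqrt m) * relu (dot (W0 j) (X i)) := by
            refine Finset.sum_congr rfl fun j _ => ?_
            rw [abs_mul, haj j, abs_of_nonneg (hrelu0 j)]
        _ ≤ ∑ j, (1 / Real.sqrt m) * (nrm (W0 j) * Real.sqrt (2 * p)) := by
            refine Finset.sum_le_sum fun j _ => ?_
            exact mul_le_mul_of_nonneg_left (hrelu_le j) (by positivity)
    have step2 : ∑ j, (1 / Real.sqrt m) * (nrm (W0 j) * Real.sqrt (2 * p)) =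
        (1 / Real.sqrt m) * Real.sqrt (2 * p) * ∑ j, nrm (W0 j) := by
      rw [Finset.mul_sum]
      exact Finset.sum_congr rfl fun j _ => by ring
    have step3 : (1 / Real.sqrt m) * Real.sqrt (2 * p) * ∑ j, nrm (W0 j) ≤
        (1 / Real.sqrt m) * Real.sqrt (2 * p) *
          (Real.sqrt m * Real.sqrt (3 / 2 * winit ^ 2 * m * p)) := by
      have hmn : Real.sqrt (∑ j, ∑ k, (W0 j k) ^ 2) ≤
          Real.sqrt (3 / 2 * winit ^ 2 * m * p) := Real.sqrt_le_sqrt hCc1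
      have h4 : ∑ j, nrm (W0 j) ≤ Real.sqrt m * Real.sqrt (3 / 2 * winit ^ 2 * m * p) := by
        calc ∑ j, nrm (W0 j) ≤ Real.sqrt m * Real.sqrt (∑ j, ∑ k, (W0 j k) ^ 2) := hsumnrm
          _ ≤ _ := mul_le_mul_of_nonneg_left hmn (Real.sqrt_nonneg _)
      exact mul_le_mul_of_nonneg_left h4 (by positivity)
    have hmm1 : (1 / Real.sqrt m) * Real.sqrt m ≤ 1 := by
      rcases Nat.eq_zero_or_pos m with h | h
      · subst h; simp
      · have hne : Real.sqrt (m : ℝ) ≠ 0 := by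
          have : (0 : ℝ) < Real.sqrt m := Real.sqrt_pos.2 (by exact_mod_cast h)
          exact ne_of_gt this
        rw [one_div_mul_cancel hne]
    have hprod : Real.sqrt (2 * p) * Real.sqrt (3 / 2 * winit ^ 2 * m * p) =
        (p : ℝ) * winit * Real.sqrt (3 * m) := by
      rw [← Real.sqrt_mul (by positivity)]
      rw [show (2 * (p : ℝ)) * (3 / 2 * winit ^ 2 * m * p) =
        ((p : ℝ) * winit) ^ 2 * (3 * m) by ring]
      rw [Real.sqrt_mul (sq_nonneg _), Real.sqrt_sq (mul_nonneg hp0 hw)]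
    calc |nnet a W0 (X i)|
        ≤ (1 / Real.sqrt m) * Real.sqrt (2 * p) * ∑ j, nrm (W0 j) := by
          rw [← step2]; exact step1
      _ ≤ (1 / Real.sqrt m) * Real.sqrt (2 * p) *
          (Real.sqrt m * Real.sqrt (3 / 2 * winit ^ 2 * m * p)) := step3
      _ = ((1 / Real.sqrt m) * Real.sqrt m) *
          (Real.sqrt (2 * p) * Real.sqrt (3 / 2 * winit ^ 2 * m * p)) := by ring
      _ ≤ 1 * ((p : ℝ) * winit * Real.sqrt (3 * m)) := by
          rw [hprod]
          exact mul_le_mul_of_nonneg_right hmm1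
            (mul_nonneg (mul_nonneg hp0 hw) (Real.sqrt_nonneg _))
      _ = (p : ℝ) * winit * Real.sqrt (3 * m) := one_mul _
  -- Part 1
  have part1 : ∀ i : Fin n, |lossG (Y i * nnet a W0 (X i)) - 1 / 2| ≤
      (p : ℝ) * winit * Real.sqrt (3 * m) / 2 := by
    intro i
    have h1 := sigmoid_dev (Y i * nnet a W0 (X i))
    have h2 : |Y i * nnet a W0 (X i)| = |nnet a W0 (X i)| := by
      rw [abs_mul]
      rcases hY i with h | h <;> rw [h] <;> norm_num
    rw [h2] at h1
    have := hnet i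
    linarith
  refine ⟨part1, ?_⟩
  -- Part 2
  set H : ℝ := (p : ℝ) * winit * Real.sqrt (3 * m) / 2 with hHdef
  have hH0 : 0 ≤ H :=
    div_nonneg (mul_nonneg (mul_nonneg hp0 hw) (Real.sqrt_nonneg _)) (by norm_num)
  set c : Fin m → Fin n → ℝ := fun j i =>
    (1 / 2 - lossG (Y i * nnet a W0 (X i))) * (reluD (dot (W0 j) (X i)) * Y i) with hcdef
  have hc : ∀ j i, |c j i| ≤ H := by
    intro j i
    have h1 : |1 / 2 - lossG (Y i * nnet a W0 (X i))| ≤ H := by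
      rw [abs_sub_comm]; exact part1 i
    have h2 : |reluD (dot (W0 j) (X i))| ≤ 1 := by
      unfold reluD; split <;> norm_num
    have h3 : |Y i| = 1 := by rcases hY i with h | h <;> rw [h] <;> norm_num
    have hBC : |reluD (dot (W0 j) (X i)) * Y i| ≤ 1 := by
      rw [abs_mul, h3, mul_one]; exact h2
    calc |c j i| = |1 / 2 - lossG (Y i * nnet a W0 (X i))| *
          |reluD (dot (W0 j) (X i)) * Y i| := by rw [hcdef]; rw [abs_mul]
      _ ≤ H * 1 := mul_le_mul h1 hBC (abs_nonneg _) hH0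
      _ = H := mul_one _
  set M : Fin m → Fin p → ℝ := (fun j k =>
      W0 j k + α * a j / (2 * n) *
        ∑ i, reluD (dot (W0 j) (X i)) * (Y i * X i k)) -
    gdIter α X Y a W0 1 with hMdef
  have hgd1 : gdIter α X Y a W0 1 = gdStep α X Y a W0 := rfl
  have hD : ∀ j k, M j k = (α * a j / n) * ∑ i, c j i * X i k := by
    intro j k
    have hsum : ∑ i, c j i * X i k =
        (1 / 2) * (∑ i, reluD (dot (W0 j) (X i)) * (Y i * X i k)) -
        ∑ i, lossG (Y i * nnet a W0 (X i)) * reluD (dot (W0 j) (X i)) * (Y i * X i k) := by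
      rw [Finset.mul_sum, ← Finset.sum_sub_distrib]
      refine Finset.sum_congr rfl fun i _ => ?_
      simp only [hcdef]
      ring
    have hne : (n : ℝ) ≠ 0 := ne_of_gt hn0
    rw [hMdef]
    simp only [Pi.sub_apply, hgd1, gdStep]
    rw [hsum]
    field_simp
    ring
  have haj2 : ∀ j, (a j) ^ 2 = 1 / (m : ℝ) := by
    intro j
    have hsm : Real.sqrt (m : ℝ) ^ 2 = (m : ℝ) := Real.sq_sqrt (Nat.cast_nonneg m)
    rcases ha j with h | h <;> rw [h]
    · rw [div_pow, one_pow, hsm]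
    · rw [neg_pow, div_pow, one_pow, hsm]
      norm_num
  -- the Gram sum bound
  have hS : ∑ i : Fin n, ∑ i' : Fin n, |dot (X i) (X i')| ≤ 4 * p * n := by
    have hB0 : 0 ≤ nrm μ1 ^ 2 + 10 * Real.sqrt ((p : ℝ) * Real.log n) := by positivity
    have hrow : ∀ i : Fin n, ∑ i' : Fin n, |dot (X i) (X i')| ≤ 4 * p := by
      intro i
      have hsplit : ∑ i' : Fin n, |dot (X i) (X i')| =
          |dot (X i) (X i)| + ∑ i' ∈ Finset.univ.erase i, |dot (X i) (X i')| :=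
        (Finset.add_sum_erase _ _ (Finset.mem_univ i)).symm
      have hdiag : |dot (X i) (X i)| ≤ 2 * p := by
        rw [abs_of_nonneg (dot_self_nonneg' _)]; exact hXnorm i
      have herase : ∑ i' ∈ Finset.univ.erase i, |dot (X i) (X i')| ≤
          (n : ℝ) * (nrm μ1 ^ 2 + 10 * Real.sqrt ((p : ℝ) * Real.log n)) := by
        calc ∑ i' ∈ Finset.univ.erase i, |dot (X i) (X i')|
            ≤ ∑ _i' ∈ Finset.univ.erase i,
                (nrm μ1 ^ 2 + 10 * Real.sqrt ((p : ℝ) * Real.log n)) := by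
              refine Finset.sum_le_sum fun i' hi' => ?_
              exact hoff i i' (Ne.symm (Finset.ne_of_mem_erase hi'))
          _ = ((Finset.univ.erase i).card : ℝ) *
                (nrm μ1 ^ 2 + 10 * Real.sqrt ((p : ℝ) * Real.log n)) := by
              rw [Finset.sum_const, nsmul_eq_mul]
          _ ≤ (n : ℝ) * (nrm μ1 ^ 2 + 10 * Real.sqrt ((p : ℝ) * Real.log n)) := by
              apply mul_le_mul_of_nonneg_right _ hB0
              have hcard : (Finset.univ.erase i).card ≤ n := by
                calc (Finset.univ.erase i).card ≤ (Finset.univ : Finset (Fin n)).card :=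
                      Finset.card_erase_le
                  _ = n := by rw [Finset.card_univ, Fintype.card_fin]
              exact_mod_cast hcard
      have h1 : (n : ℝ) * nrm μ1 ^ 2 ≤ p := by nlinarith
      have h2 : (n : ℝ) * (10 * Real.sqrt ((p : ℝ) * Real.log n)) ≤ p := by
        have he : 10 * (n : ℝ) * ((p : ℝ) / (10 * n)) = p := by field_simp
        nlinarith [Real.sqrt_nonneg ((p : ℝ) * Real.log n),
          mul_le_mul_of_nonneg_left hs (by positivity : (0 : ℝ) ≤ 10 * (n : ℝ))]
      rw [hsplit]
      nlinarith [herase]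
    calc ∑ i : Fin n, ∑ i' : Fin n, |dot (X i) (X i')|
        ≤ ∑ _i : Fin n, 4 * (p : ℝ) := Finset.sum_le_sum fun i _ => hrow i
      _ = (n : ℝ) * (4 * p) := by
          rw [Finset.sum_const, Finset.card_univ, Fintype.card_fin, nsmul_eq_mul]
      _ = 4 * p * n := by ring
  have hQ : ∀ j : Fin m, ∑ k, (∑ i, c j i * X i k) ^ 2 ≤ H ^ 2 * (4 * p * n) := by
    intro j
    have e1 : ∑ k, (∑ i, c j i * X i k) ^ 2 =
        ∑ i, ∑ i', (c j i * c j i') * dot (X i) (X i') := by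
      have e2 : ∀ k : Fin p, (∑ i, c j i * X i k) ^ 2 =
          ∑ i, ∑ i', (c j i * c j i') * (X i k * X i' k) := by
        intro k
        rw [sq, Finset.sum_mul_sum]
        exact Finset.sum_congr rfl fun i _ => Finset.sum_congr rfl fun i' _ => by ring
      calc ∑ k, (∑ i, c j i * X i k) ^ 2
          = ∑ k, ∑ i, ∑ i', (c j i * c j i') * (X i k * X i' k) :=
            Finset.sum_congr rfl fun k _ => e2 k
        _ = ∑ i, ∑ i', ∑ k, (c j i * c j i') * (X i k * X i' k) := by
            rw [Finset.sum_comm]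
            exact Finset.sum_congr rfl fun i _ => Finset.sum_comm
        _ = ∑ i, ∑ i', (c j i * c j i') * dot (X i) (X i') := by
            refine Finset.sum_congr rfl fun i _ => Finset.sum_congr rfl fun i' _ => ?_
            rw [← Finset.mul_sum]
            rfl
    rw [e1]
    calc ∑ i, ∑ i', (c j i * c j i') * dot (X i) (X i')
        ≤ ∑ i, ∑ i', H ^ 2 * |dot (X i) (X i')| := by
          refine Finset.sum_le_sum fun i _ => Finset.sum_le_sum fun i' _ => ?_
          calc (c j i * c j i') * dot (X i) (X i')
              ≤ |(c j i * c j i') * dot (X i) (X i')| := le_abs_self _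
            _ = |c j i| * |c j i'| * |dot (X i) (X i')| := by rw [abs_mul, abs_mul]
            _ ≤ H * H * |dot (X i) (X i')| := by
                apply mul_le_mul_of_nonneg_right _ (abs_nonneg _)
                exact mul_le_mul (hc j i) (hc j i') (abs_nonneg _) hH0
            _ = H ^ 2 * |dot (X i) (X i')| := by ring
      _ = H ^ 2 * ∑ i, ∑ i', |dot (X i) (X i')| := by
          rw [Finset.mul_sum]
          exact Finset.sum_congr rfl fun i _ => (Finset.mul_sum _ _ _).symm
      _ ≤ H ^ 2 * (4 * p * n) := mul_le_mul_of_nonneg_left hS (sq_nonneg _)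
  have hRHS0 : 0 ≤ α * winit * (p : ℝ) ^ ((3 : ℝ) / 2) * Real.sqrt (3 * m) / Real.sqrt n := by
    apply div_nonneg _ (Real.sqrt_nonneg _)
    exact mul_nonneg (mul_nonneg (mul_nonneg hα.le hw) (Real.rpow_nonneg hp0 _))
      (Real.sqrt_nonneg _)
  have hsum_le : ∑ j, ∑ k, (M j k) ^ 2 ≤
      (α * winit * (p : ℝ) ^ ((3 : ℝ) / 2) * Real.sqrt (3 * m) / Real.sqrt n) ^ 2 := by
    have hsq3m : Real.sqrt (3 * (m : ℝ)) ^ 2 = 3 * (m : ℝ) := Real.sq_sqrt (by positivity)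
    have hsqn : Real.sqrt (n : ℝ) ^ 2 = (n : ℝ) := Real.sq_sqrt hn0.le
    have hp32 : (((p : ℝ)) ^ ((3 : ℝ) / 2)) ^ 2 = (p : ℝ) ^ (3 : ℕ) := by
      rw [← Real.rpow_natCast ((p : ℝ) ^ ((3 : ℝ) / 2)) 2, ← Real.rpow_mul hp0]
      norm_num
    have hRsq : (α * winit * (p : ℝ) ^ ((3 : ℝ) / 2) * Real.sqrt (3 * m) / Real.sqrt n) ^ 2 =
        α ^ 2 * winit ^ 2 * (p : ℝ) ^ (3 : ℕ) * (3 * m) / n := by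
      rw [div_pow, mul_pow, mul_pow, mul_pow, hsq3m, hsqn, hp32]
    calc ∑ j, ∑ k, (M j k) ^ 2
        = ∑ j, (α * a j / n) ^ 2 * ∑ k, (∑ i, c j i * X i k) ^ 2 := by
          refine Finset.sum_congr rfl fun j _ => ?_
          rw [Finset.mul_sum]
          exact Finset.sum_congr rfl fun k _ => by rw [hD j k, mul_pow]
      _ ≤ ∑ _j : Fin m, (α ^ 2 * (1 / m) / n ^ 2) * (H ^ 2 * (4 * p * n)) := by
          refine Finset.sum_le_sum fun j _ => ?_
          have he : (α * a j / n) ^ 2 = α ^ 2 * (1 / m) / n ^ 2 := by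
            rw [div_pow, mul_pow, haj2 j]
          rw [he]
          exact mul_le_mul_of_nonneg_left (hQ j) (by positivity)
      _ = (m : ℝ) * ((α ^ 2 * (1 / m) / n ^ 2) * (H ^ 2 * (4 * p * n))) := by
          rw [Finset.sum_const, Finset.card_univ, Fintype.card_fin, nsmul_eq_mul]
      _ ≤ (α * winit * (p : ℝ) ^ ((3 : ℝ) / 2) * Real.sqrt (3 * m) / Real.sqrt n) ^ 2 := by
          rcases Nat.eq_zero_or_pos m with hm | hm
          · rw [hRsq]
            subst hm
            simp
          · have hmne : (m : ℝ) ≠ 0 := by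
              have : (0 : ℝ) < (m : ℝ) := by exact_mod_cast hm
              exact ne_of_gt this
            have hne : (n : ℝ) ≠ 0 := ne_of_gt hn0
            rw [hRsq, hHdef]
            rw [show ((p : ℝ) * winit * Real.sqrt (3 * m) / 2) ^ 2 =
              (p : ℝ) ^ 2 * winit ^ 2 * (Real.sqrt (3 * m)) ^ 2 / 4 by ring, hsq3m]
            apply le_of_eq
            field_simp
  calc frob M = Real.sqrt (∑ j, ∑ k, (M j k) ^ 2) := rfl
    _ ≤ Real.sqrt ((α * winit * (p : ℝ) ^ ((3 : ℝ) / 2) * Real.sqrt (3 * m) / Real.sqrt n) ^ 2) :=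
        Real.sqrt_le_sqrt hsum_le
    _ = α * winit * (p : ℝ) ^ ((3 : ℝ) / 2) * Real.sqrt (3 * m) / Real.sqrt n :=
        Real.sqrt_sq hRHS0

end XOR
end
end

section
/- Let Z = (z_1, …, z_n) ~ N(0, Σ) be a centered Gaussian vector with Σ_{ii} = 1 for all i and |Σ_{ij}| ≤ 1/(C n²) for all i ≠ j, with C a sufficiently large universal constant and n sufficiently large. Then for every subset A ⊆ [n], γ1^n ≤ P(z_i > 0 for all i ∈ A and z_i < 0 for all i ∈ [n] \ A) ≤ γ2^n, where γ1 = 1/2 − 2/(C n) and γ2 = 1/2 + 2/(C n). -/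
open MeasureTheory ProbabilityTheory BigOperators Filter
open scoped ENNReal NNReal

noncomputable section

namespace XOR

attribute [local instance] Classical.propDecidable

end XOR

/-!
Write `Σ = A Aᵀ` and `d = 1/(Cn)`. The entrywise bounds give `‖(Σ - 1) v‖ ≤ d ‖v‖`, and from this
`a |z|² ≤ |A⁻¹ z|² ≤ b |z|²` with `a = (1-d)/(1+d)²`, `b = (1+d)/(1-d)²`. The law of `Aξ` has a
density proportional to `exp (-|A⁻¹ z|² / 2)`, so an orthant probability is the integral of that
function over the orthant divided by its integral over `ℝⁿ`. Comparing with the isotropic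
Gaussians `exp (-b |z|² / 2)` and `exp (-a |z|² / 2)`, whose integrals factor over the
coordinates, puts the probability between `(√(a/b)/2)ⁿ` and `(√(b/a)/2)ⁿ`, and both are
`(1/2 ± O(d))ⁿ`.
-/

section NearIsometry

open WithLp Matrix

lemma abs_real_inner_sub_norm_sq_le {F : Type*} [NormedAddCommGroup F] [InnerProductSpace ℝ F]
    {w u : F} {d : ℝ} (h : ‖u - w‖ ≤ d * ‖w‖) : |inner ℝ w u - ‖w‖ ^ 2| ≤ d * ‖w‖ ^ 2 := by
  have hsplit : inner ℝ w u - ‖w‖ ^ 2 = inner ℝ w (u - w) := by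
    rw [inner_sub_right, real_inner_self_eq_norm_sq]
  rw [hsplit]
  calc |inner ℝ w (u - w)| ≤ ‖w‖ * ‖u - w‖ := abs_real_inner_le_norm _ _
    _ ≤ ‖w‖ * (d * ‖w‖) := by gcongr
    _ = d * ‖w‖ ^ 2 := by ring

variable {ι : Type*} [Fintype ι]

lemma norm_toLp_mulVec_le_of_abs_le {M : Matrix ι ι ℝ} {ε : ℝ} (hM : ∀ i j, |M i j| ≤ ε)
    (v : ι → ℝ) : ‖toLp 2 (M *ᵥ v)‖ ≤ Fintype.card ι * ε * ‖toLp 2 v‖ := by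
  have hε : 0 ≤ Fintype.card ι * ε := by
    rcases isEmpty_or_nonempty ι with _ | ⟨⟨i⟩⟩
    · simp
    · exact mul_nonneg (Nat.cast_nonneg _) ((abs_nonneg _).trans (hM i i))
  have hrow : ∀ i, (M *ᵥ v) i ^ 2 ≤ Fintype.card ι * ε ^ 2 * ‖toLp 2 v‖ ^ 2 := by
    intro i
    calc (M *ᵥ v) i ^ 2 ≤ (∑ j, M i j ^ 2) * ∑ j, v j ^ 2 :=
          Finset.sum_mul_sq_le_sq_mul_sq _ _ _
      _ ≤ (Fintype.card ι * ε ^ 2) * ‖toLp 2 v‖ ^ 2 := by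
          rw [EuclideanSpace.real_norm_sq_eq]
          gcongr
          calc ∑ j, M i j ^ 2 ≤ ∑ _j : ι, ε ^ 2 := Finset.sum_le_sum fun j _ => by
                simpa using sq_le_sq' (abs_le.1 (hM i j)).1 (abs_le.1 (hM i j)).2
            _ = _ := by simp
  refine le_of_sq_le_sq ?_ (by positivity)
  calc ‖toLp 2 (M *ᵥ v)‖ ^ 2 = ∑ i, (M *ᵥ v) i ^ 2 := EuclideanSpace.real_norm_sq_eq _
    _ ≤ ∑ _i : ι, Fintype.card ι * ε ^ 2 * ‖toLp 2 v‖ ^ 2 := Finset.sum_le_sum fun i _ => hrow i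
    _ = _ := by simp; ring

variable [DecidableEq ι] {A : Matrix ι ι ℝ} {d : ℝ}

lemma isUnit_det_of_norm_mulVec_sub_le (hd : d < 1)
    (hA : ∀ v, ‖toLp 2 ((A * Aᵀ - 1) *ᵥ v)‖ ≤ d * ‖toLp 2 v‖) : IsUnit A.det := by
  have hS : (A * Aᵀ).det ≠ 0 := by
    intro h0
    obtain ⟨v, hv, hSv⟩ := exists_mulVec_eq_zero_iff.2 h0
    have hle := hA v
    rw [sub_mulVec, hSv, one_mulVec, zero_sub, toLp_neg, norm_neg] at hle
    have hpos : 0 < ‖toLp 2 v‖ := norm_pos_iff.2 (by simpa using hv)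
    nlinarith
  rw [det_mul, det_transpose] at hS
  exact isUnit_iff_ne_zero.2 (left_ne_zero_of_mul hS)

lemma norm_inv_mulVec_sq_bounds (hd₀ : 0 ≤ d) (hd : d < 1)
    (hA : ∀ v, ‖toLp 2 ((A * Aᵀ - 1) *ᵥ v)‖ ≤ d * ‖toLp 2 v‖) (z : ι → ℝ) :
    (1 - d) / (1 + d) ^ 2 * ‖toLp 2 z‖ ^ 2 ≤ ‖toLp 2 (A⁻¹ *ᵥ z)‖ ^ 2 ∧
      ‖toLp 2 (A⁻¹ *ᵥ z)‖ ^ 2 ≤ (1 + d) / (1 - d) ^ 2 * ‖toLp 2 z‖ ^ 2 := by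
  have hAu := isUnit_det_of_norm_mulVec_sub_le hd hA
  have hSu : IsUnit (A * Aᵀ).det := by rw [det_mul, det_transpose]; exact hAu.mul hAu
  -- `A⁻¹ z = Aᵀ w` for `w = Σ⁻¹ z`, so `|A⁻¹ z|² = ⟪w, Σ w⟫ = ⟪w, z⟫` while `z - w = (Σ - 1) w`.
  set w := (A * Aᵀ)⁻¹ *ᵥ z
  have hz : (A * Aᵀ) *ᵥ w = z := by
    rw [mulVec_mulVec, mul_nonsing_inv _ hSu, one_mulVec]
  have hx : ‖toLp 2 (A⁻¹ *ᵥ z)‖ ^ 2 = inner ℝ (toLp 2 w) (toLp 2 z) := by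
    rw [← hz, mulVec_mulVec, ← Matrix.mul_assoc, nonsing_inv_mul _ hAu, Matrix.one_mul,
      ← real_inner_self_eq_norm_sq, EuclideanSpace.inner_toLp_toLp,
      EuclideanSpace.inner_toLp_toLp, star_trivial, star_trivial, ← mulVec_mulVec,
      dotProduct_comm, dotProduct_mulVec, ← mulVec_transpose, transpose_transpose]
  have hsub : ‖toLp 2 z - toLp 2 w‖ ≤ d * ‖toLp 2 w‖ := by
    have := hA w
    rwa [sub_mulVec, one_mulVec, hz, toLp_sub] at this
  have hinner := abs_le.1 (abs_real_inner_sub_norm_sq_le hsub)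
  have hnorm := abs_le.1 ((abs_norm_sub_norm_le _ _).trans hsub)
  have hw := norm_nonneg (toLp 2 w)
  have hz_le : ‖toLp 2 z‖ ^ 2 ≤ (1 + d) ^ 2 * ‖toLp 2 w‖ ^ 2 := by
    rw [← mul_pow]; exact pow_le_pow_left₀ (norm_nonneg _) (by linarith) 2
  have hz_ge : (1 - d) ^ 2 * ‖toLp 2 w‖ ^ 2 ≤ ‖toLp 2 z‖ ^ 2 := by
    rw [← mul_pow]; exact pow_le_pow_left₀ (by nlinarith) (by linarith) 2
  rw [hx, div_mul_eq_mul_div, div_mul_eq_mul_div, div_le_iff₀ (by positivity),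
    le_div_iff₀ (by nlinarith)]
  constructor <;> nlinarith

end NearIsometry

section GaussianKernel

open Set Real

/-- `gaussianKernel 1` is the standard normal density; the normalising factor is kept at
`(2π)^(-1/2)` for every `c`, so that kernels with different `c` compare pointwise. -/
def gaussianKernel (c t : ℝ) : ℝ := (√(2 * π))⁻¹ * rexp (-(c / 2) * t ^ 2)

lemma gaussianKernel_nonneg (c t : ℝ) : 0 ≤ gaussianKernel c t := by
  unfold gaussianKernel; positivity

lemma measurable_gaussianKernel (c : ℝ) : Measurable (gaussianKernel c) := by
  unfold gaussianKernel; fun_prop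

lemma integrable_gaussianKernel {c : ℝ} (hc : 0 < c) : Integrable (gaussianKernel c) :=
  (integrable_exp_neg_mul_sq (half_pos hc)).const_mul _

lemma gaussianPDFReal_zero_one : gaussianPDFReal 0 1 = gaussianKernel 1 := by
  ext t
  simp [gaussianPDFReal, gaussianKernel, div_eq_inv_mul]

lemma integral_gaussianKernel_Ioi {c : ℝ} (hc : 0 < c) :
    ∫ t in Ioi 0, gaussianKernel c t = (2 * √c)⁻¹ := by
  unfold gaussianKernel
  rw [integral_const_mul, integral_gaussian_Ioi, show π / (c / 2) = 2 * π / c by ring,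
    sqrt_div' _ hc.le]
  field_simp

lemma integral_gaussianKernel_Iio {c : ℝ} (hc : 0 < c) :
    ∫ t in Iio 0, gaussianKernel c t = (2 * √c)⁻¹ := by
  rw [← integral_Iic_eq_integral_Iio, ← neg_zero, ← integral_comp_neg_Ioi]
  simpa [gaussianKernel] using integral_gaussianKernel_Ioi hc

lemma integral_gaussianKernel {c : ℝ} (hc : 0 < c) : ∫ t, gaussianKernel c t = (√c)⁻¹ := by
  unfold gaussianKernel
  rw [integral_const_mul, integral_gaussian, show π / (c / 2) = 2 * π / c by ring,
    sqrt_div' _ hc.le]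
  field_simp

end GaussianKernel

section Orthant

variable {ι : Type*}

def orthant (S : Finset ι) : Set (ι → ℝ) := {z | (∀ i ∈ S, 0 < z i) ∧ ∀ i ∉ S, z i < 0}

open Set in
lemma orthant_eq_pi [DecidableEq ι] (S : Finset ι) :
    orthant S = univ.pi fun i => if i ∈ S then Ioi 0 else Iio 0 := by
  ext z
  simp only [orthant, mem_ofPred_eq, mem_univ_pi]
  refine ⟨fun ⟨hpos, hneg⟩ i => ?_, fun h => ⟨fun i hi => ?_, fun i hi => ?_⟩⟩
  · split_ifs with hi
    exacts [hpos i hi, hneg i hi]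
  · simpa [hi] using h i
  · simpa [hi] using h i

end Orthant

section GaussianIntegrals

open Set Real WithLp

variable {ι : Type*} [Fintype ι]

lemma prod_gaussianKernel (c : ℝ) (z : ι → ℝ) :
    ∏ i, gaussianKernel c (z i) =
      (√(2 * π))⁻¹ ^ Fintype.card ι * rexp (-(c / 2) * ‖toLp 2 z‖ ^ 2) := by
  simp only [gaussianKernel, Finset.prod_mul_distrib, Finset.prod_const, Finset.card_univ,
    ← Real.exp_sum, EuclideanSpace.real_norm_sq_eq, Finset.mul_sum]

lemma prod_gaussianKernel_le {c c' : ℝ} {z z' : ι → ℝ}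
    (h : c' * ‖toLp 2 z'‖ ^ 2 ≤ c * ‖toLp 2 z‖ ^ 2) :
    ∏ i, gaussianKernel c (z i) ≤ ∏ i, gaussianKernel c' (z' i) := by
  rw [prod_gaussianKernel, prod_gaussianKernel]
  exact mul_le_mul_of_nonneg_left (exp_le_exp.2 (by linarith)) (by positivity)

lemma setLIntegral_univ_pi_ofReal_prod {f : ι → ℝ → ℝ} (hf₀ : ∀ i t, 0 ≤ f i t)
    (hf : ∀ i, Integrable (f i)) (s : ι → Set ℝ) :
    ∫⁻ x in univ.pi s, ENNReal.ofReal (∏ i, f i (x i)) =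
      ∏ i, ENNReal.ofReal (∫ t in s i, f i t) := by
  rw [volume_pi, Measure.restrict_pi_pi, ← ofReal_integral_eq_lintegral_ofReal
      (Integrable.fintype_prod fun i => (hf i).restrict)
      (ae_of_all _ fun x => Finset.prod_nonneg fun i _ => hf₀ i (x i)),
    integral_fintype_prod_eq_prod,
    ENNReal.ofReal_prod_of_nonneg fun i _ => integral_nonneg (hf₀ i)]

lemma setLIntegral_orthant_prod_gaussianKernel {c : ℝ} (hc : 0 < c) (S : Finset ι) :
    ∫⁻ z in orthant S, ENNReal.ofReal (∏ i, gaussianKernel c (z i)) =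
      ENNReal.ofReal ((2 * √c)⁻¹ ^ Fintype.card ι) := by
  classical
  rw [orthant_eq_pi, setLIntegral_univ_pi_ofReal_prod (fun _ => gaussianKernel_nonneg c)
    (fun _ => integrable_gaussianKernel hc), ENNReal.ofReal_pow (by positivity),
    ← Finset.card_univ, ← Finset.prod_const]
  refine Finset.prod_congr rfl fun i _ => ?_
  split_ifs
  exacts [by rw [integral_gaussianKernel_Ioi hc], by rw [integral_gaussianKernel_Iio hc]]

lemma lintegral_prod_gaussianKernel {c : ℝ} (hc : 0 < c) :
    ∫⁻ z : ι → ℝ, ENNReal.ofReal (∏ i, gaussianKernel c (z i)) =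
      ENNReal.ofReal ((√c)⁻¹ ^ Fintype.card ι) := by
  rw [← Measure.restrict_univ (μ := volume), ← Set.pi_univ univ,
    setLIntegral_univ_pi_ofReal_prod (fun _ => gaussianKernel_nonneg c)
      (fun _ => integrable_gaussianKernel hc)]
  simp [integral_gaussianKernel hc, ← ENNReal.ofReal_pow (inv_nonneg.2 (sqrt_nonneg c))]

lemma pi_gaussianReal_eq_withDensity :
    Measure.pi (fun _ : ι => gaussianReal 0 1) =
      volume.withDensity fun x => ENNReal.ofReal (∏ i, gaussianKernel 1 (x i)) := by
  refine Measure.pi_eq fun s hs => ?_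
  rw [withDensity_apply _ (.univ_pi hs), setLIntegral_univ_pi_ofReal_prod
    (fun _ => gaussianKernel_nonneg 1) (fun _ => integrable_gaussianKernel one_pos)]
  simp [gaussianReal_apply_eq_integral, gaussianPDFReal_zero_one]

end GaussianIntegrals

section LinearImage

open Set Real WithLp Matrix

lemma measure_eq_setLIntegral_div_lintegral {α : Type*} [MeasurableSpace α] {μ ν : Measure α}
    [IsProbabilityMeasure μ] [SFinite ν] {c : ℝ≥0∞} {g : α → ℝ≥0∞}
    (h : μ = c • ν.withDensity g) (s : Set α) :
    μ s = (∫⁻ x in s, g x ∂ν) / ∫⁻ x, g x ∂ν := by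
  have hc : c = (∫⁻ x, g x ∂ν)⁻¹ := by
    apply ENNReal.eq_inv_of_mul_eq_one_left
    simpa [h, withDensity_apply'] using measure_univ (μ := μ)
  rw [h, Measure.smul_apply, withDensity_apply', smul_eq_mul, hc, div_eq_mul_inv, mul_comm]

variable {ι : Type*} [Fintype ι]

lemma measurable_mulVec (A : Matrix ι ι ℝ) : Measurable (A *ᵥ ·) :=
  (continuous_const.matrix_mulVec continuous_id).measurable

variable [DecidableEq ι]

lemma lintegral_comp_mulVec {A : Matrix ι ι ℝ} (hA : A.det ≠ 0)
    {g : (ι → ℝ) → ℝ≥0∞} (hg : Measurable g) :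
    ∫⁻ z, g (A *ᵥ z) = ENNReal.ofReal |A.det|⁻¹ * ∫⁻ x, g x := by
  rw [← lintegral_map hg (measurable_mulVec A), show (A *ᵥ ·) = toLin' A from rfl,
    Real.map_matrix_volume_pi_eq_smul_volume_pi hA, lintegral_smul_measure, abs_inv, smul_eq_mul]

lemma map_mulVec_withDensity {A : Matrix ι ι ℝ} (hA : IsUnit A.det)
    {f : (ι → ℝ) → ℝ≥0∞} (hf : Measurable f) :
    (volume.withDensity f).map (A *ᵥ ·) =
      ENNReal.ofReal |A.det|⁻¹ • volume.withDensity fun z => f (A⁻¹ *ᵥ z) := by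
  ext s hs
  have hpre := measurable_mulVec A hs
  have hcomp : s.indicator (fun z => f (A⁻¹ *ᵥ z)) =
      fun z => ((A *ᵥ ·) ⁻¹' s).indicator f (A⁻¹ *ᵥ z) := by
    ext z
    have hmem : A⁻¹ *ᵥ z ∈ (A *ᵥ ·) ⁻¹' s ↔ z ∈ s := by
      rw [mem_preimage, mulVec_mulVec, mul_nonsing_inv _ hA, one_mulVec]
    by_cases hz : z ∈ s
    · rw [indicator_of_mem hz, indicator_of_mem (hmem.2 hz)]
    · rw [indicator_of_notMem hz, indicator_of_notMem (mt hmem.1 hz)]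
  have hdet : (A⁻¹).det ≠ 0 := by simpa [det_nonsing_inv] using hA.ne_zero
  rw [Measure.map_apply (measurable_mulVec A) hs, withDensity_apply _ hpre, Measure.smul_apply,
    withDensity_apply _ hs, smul_eq_mul, ← lintegral_indicator hs, hcomp,
    lintegral_comp_mulVec hdet (hf.indicator hpre), lintegral_indicator hpre, ← mul_assoc,
    ← ENNReal.ofReal_mul (by positivity)]
  simp [det_nonsing_inv, hA.ne_zero]

lemma map_mulVec_pi_gaussianReal_apply {A : Matrix ι ι ℝ} (hA : IsUnit A.det)
    (s : Set (ι → ℝ)) :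
    (Measure.pi fun _ : ι => gaussianReal 0 1).map (A *ᵥ ·) s =
      (∫⁻ z in s, ENNReal.ofReal (∏ i, gaussianKernel 1 ((A⁻¹ *ᵥ z) i))) /
        ∫⁻ z, ENNReal.ofReal (∏ i, gaussianKernel 1 ((A⁻¹ *ᵥ z) i)) := by
  have : IsProbabilityMeasure ((Measure.pi fun _ : ι => gaussianReal 0 1).map (A *ᵥ ·)) :=
    Measure.isProbabilityMeasure_map (measurable_mulVec A).aemeasurable
  refine measure_eq_setLIntegral_div_lintegral (c := ENNReal.ofReal |A.det|⁻¹) ?_ s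
  rw [pi_gaussianReal_eq_withDensity, map_mulVec_withDensity hA]
  exact ENNReal.measurable_ofReal.comp
    (Finset.measurable_prod _ fun i _ => (measurable_gaussianKernel 1).comp (measurable_pi_apply i))

theorem map_mulVec_pi_gaussianReal_orthant_bounds {A : Matrix ι ι ℝ}
    (hA : IsUnit A.det) {a b : ℝ} (ha : 0 < a) (hb : 0 < b)
    (hab : ∀ z, a * ‖toLp 2 z‖ ^ 2 ≤ ‖toLp 2 (A⁻¹ *ᵥ z)‖ ^ 2 ∧
      ‖toLp 2 (A⁻¹ *ᵥ z)‖ ^ 2 ≤ b * ‖toLp 2 z‖ ^ 2) (S : Finset ι) :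
    ENNReal.ofReal ((√a / (2 * √b)) ^ Fintype.card ι) ≤
        (Measure.pi fun _ : ι => gaussianReal 0 1).map (A *ᵥ ·) (orthant S) ∧
      (Measure.pi fun _ : ι => gaussianReal 0 1).map (A *ᵥ ·) (orthant S) ≤
        ENNReal.ofReal ((√b / (2 * √a)) ^ Fintype.card ι) := by
  have hlow : ∀ z : ι → ℝ, ENNReal.ofReal (∏ i, gaussianKernel b (z i)) ≤
      ENNReal.ofReal (∏ i, gaussianKernel 1 ((A⁻¹ *ᵥ z) i)) := fun z =>
    ENNReal.ofReal_le_ofReal (prod_gaussianKernel_le (by linarith [(hab z).2]))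
  have hup : ∀ z : ι → ℝ, ENNReal.ofReal (∏ i, gaussianKernel 1 ((A⁻¹ *ᵥ z) i)) ≤
      ENNReal.ofReal (∏ i, gaussianKernel a (z i)) := fun z =>
    ENNReal.ofReal_le_ofReal (prod_gaussianKernel_le (by linarith [(hab z).1]))
  rw [map_mulVec_pi_gaussianReal_apply hA]
  constructor
  · calc ENNReal.ofReal ((√a / (2 * √b)) ^ Fintype.card ι)
        = ENNReal.ofReal ((2 * √b)⁻¹ ^ Fintype.card ι) /
            ENNReal.ofReal ((√a)⁻¹ ^ Fintype.card ι) := by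
          rw [← ENNReal.ofReal_div_of_pos (by positivity), ← div_pow]
          congr 2
          field_simp
      _ ≤ _ := by
          rw [← setLIntegral_orthant_prod_gaussianKernel hb, ← lintegral_prod_gaussianKernel ha]
          exact ENNReal.div_le_div (lintegral_mono hlow) (lintegral_mono hup)
  · calc _ ≤ ENNReal.ofReal ((2 * √a)⁻¹ ^ Fintype.card ι) /
            ENNReal.ofReal ((√b)⁻¹ ^ Fintype.card ι) := by
          rw [← setLIntegral_orthant_prod_gaussianKernel ha, ← lintegral_prod_gaussianKernel hb]
          exact ENNReal.div_le_div (lintegral_mono hup) (lintegral_mono hlow)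
      _ = ENNReal.ofReal ((√b / (2 * √a)) ^ Fintype.card ι) := by
          rw [← ENNReal.ofReal_div_of_pos (by positivity), ← div_pow]
          congr 2
          field_simp

end LinearImage

section Constants

open Real

lemma half_sub_two_mul_le_sqrt_div {d : ℝ} (hd₀ : 0 ≤ d) (hd : d ≤ 1 / 100) :
    1 / 2 - 2 * d ≤ √((1 - d) / (1 + d) ^ 2) / (2 * √((1 + d) / (1 - d) ^ 2)) := by
  have h1 : 0 < 1 - d := by linarith
  have hratio : (1 - d) / (1 + d) ^ 2 / ((1 + d) / (1 - d) ^ 2) = (1 - d) ^ 3 / (1 + d) ^ 3 := by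
    field_simp
  rw [div_mul_eq_div_div_swap, ← sqrt_div' _ (by positivity), hratio, le_div_iff₀ two_pos]
  apply le_sqrt_of_sq_le
  rw [le_div_iff₀ (by positivity)]
  nlinarith [mul_nonneg hd₀ hd₀, mul_nonneg (mul_nonneg hd₀ hd₀) hd₀]

lemma sqrt_div_le_half_add_two_mul {d : ℝ} (hd₀ : 0 ≤ d) (hd : d ≤ 1 / 100) :
    √((1 + d) / (1 - d) ^ 2) / (2 * √((1 - d) / (1 + d) ^ 2)) ≤ 1 / 2 + 2 * d := by
  have h1 : 0 < 1 - d := by linarith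
  have hratio : (1 + d) / (1 - d) ^ 2 / ((1 - d) / (1 + d) ^ 2) = (1 + d) ^ 3 / (1 - d) ^ 3 := by
    field_simp
  rw [div_mul_eq_div_div_swap, ← sqrt_div' _ (by positivity), hratio, div_le_iff₀ two_pos,
    sqrt_le_left (by positivity), div_le_iff₀ (by positivity)]
  have hpoly : 0 ≤ 2 - 8 * d - 26 * d ^ 2 - 16 * d ^ 4 := by
    nlinarith [pow_le_pow_left₀ hd₀ hd 2, pow_le_pow_left₀ hd₀ hd 4]
  nlinarith [mul_nonneg hd₀ hpoly, pow_nonneg hd₀ 4]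

end Constants

namespace XOR

attribute [local instance] Classical.propDecidable

/-- Lemma 4.19, orthant probabilities of a weakly correlated
Gaussian vector: if `Z = A ξ` with `ξ` standard Gaussian, so that `Z ∼ N(0, Σ)`
with `Σ = A Aᵀ` satisfying `Σ_{ii} = 1` and `|Σ_{ij}| ≤ 1/(C n²)` for `i ≠ j`,
then every orthant has probability between `γ₁ⁿ` and `γ₂ⁿ`, where
`γ₁ = 1/2 − 2/(Cn)` and `γ₂ = 1/2 + 2/(Cn)`. -/
theorem gaussian_orthant_probability :
    ∃ (C₀ : ℝ) (N₀ : ℕ),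
      ∀ C : ℝ, C₀ ≤ C →
      ∀ n : ℕ, N₀ ≤ n →
      ∀ A : Matrix (Fin n) (Fin n) ℝ,
        (∀ i, (A * A.transpose) i i = 1) →
        (∀ i j, i ≠ j → |(A * A.transpose) i j| ≤ 1 / (C * (n : ℝ) ^ 2)) →
        ∀ S : Finset (Fin n),
          ENNReal.ofReal ((1 / 2 - 2 / (C * n)) ^ n) ≤
            (Measure.map A.mulVec (Measure.pi fun _ : Fin n => gaussianReal 0 1))
              {z : Fin n → ℝ | (∀ i ∈ S, 0 < z i) ∧ ∀ i ∉ S, z i < 0} ∧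
          (Measure.map A.mulVec (Measure.pi fun _ : Fin n => gaussianReal 0 1))
              {z : Fin n → ℝ | (∀ i ∈ S, 0 < z i) ∧ ∀ i ∉ S, z i < 0} ≤
            ENNReal.ofReal ((1 / 2 + 2 / (C * n)) ^ n) := by
  refine ⟨100, 1, fun C hC n hn A hdiag hoff S => ?_⟩
  have hn' : (1 : ℝ) ≤ n := by exact_mod_cast hn
  set d : ℝ := 1 / (C * n) with hd_def
  have hd₀ : 0 ≤ d := by positivity
  have hd : d ≤ 1 / 100 := one_div_le_one_div_of_le (by norm_num) (by nlinarith)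
  have hentry : ∀ i j, |(A * A.transpose - 1) i j| ≤ 1 / (C * n ^ 2) := by
    intro i j
    rcases eq_or_ne i j with rfl | hij
    · rw [Matrix.sub_apply, Matrix.one_apply_eq, hdiag, sub_self, abs_zero]
      positivity
    · simpa [Matrix.one_apply_ne hij] using hoff i j hij
  have hop : ∀ v, ‖WithLp.toLp 2 ((A * A.transpose - 1).mulVec v)‖ ≤ d * ‖WithLp.toLp 2 v‖ := by
    intro v
    convert norm_toLp_mulVec_le_of_abs_le hentry v using 2
    rw [Fintype.card_fin, hd_def]
    field_simp
  obtain ⟨hlow, hup⟩ := map_mulVec_pi_gaussianReal_orthant_bounds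
    (isUnit_det_of_norm_mulVec_sub_le (by linarith) hop) (div_pos (by linarith) (by positivity))
    (div_pos (by linarith) (by nlinarith)) (norm_inv_mulVec_sq_bounds hd₀ (by linarith) hop) S
  rw [Fintype.card_fin] at hlow hup
  rw [show 2 / (C * n) = 2 * d by rw [hd_def]; ring]
  exact ⟨(ENNReal.ofReal_le_ofReal
      (pow_le_pow_left₀ (by linarith) (half_sub_two_mul_le_sqrt_div hd₀ hd) n)).trans hlow,
    hup.trans (ENNReal.ofReal_le_ofReal
      (pow_le_pow_left₀ (by positivity) (sqrt_div_le_half_add_two_mul hd₀ hd) n))⟩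

end XOR
end
end
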